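/- arXiv:1602.08792 — 5 statements merged into one kernel-verified Lean document; each statement's English description precedes it below -/
import Mathlib

section
/- Let $T$ be a semistandard Young tableau of partition shape with entries in the positive integers, and let $u, v$ be positive integers with $v \leq u$. Let $R_u$ be the row index of the new box created when $u$ is column-inserted into $T$, and let $R_v$ be the row index of the new box created when $v$ is column-inserted into the result $[u \to T]$. Then $R_v \leq R_u$. -/
namespace DK

/-- `l` is a partition: weakly decreasing list of positive parts. -/
def IsPartition (l : List ℕ) : Prop :=
  List.Chain' (fun a b => b ≤ a) l ∧ ∀ x ∈ l, 0 < x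

/- ## Column insertion, tableaux as lists of columns -/

/-- Insert a letter into a single (strictly increasing) column, returning the
bumped letter (if any) and the new column. -/
def insertCol (a : ℕ) : List ℕ → Option ℕ × List ℕ
  | [] => (none, [a])
  | x :: xs =>
      if a ≤ x then (some x, a :: xs)
      else
        let r := insertCol a xs
        (r.1, x :: r.2)

/-- Column insertion `[a → T]` for a tableau `T` given as its list of columns. -/
def colInsert (a : ℕ) : List (List ℕ) → List (List ℕ)
  | [] => [[a]]
  | c :: cs =>
      match insertCol a c with
      | (none, c') => c' :: cs
      | (some b, c') => c' :: colInsert b cs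

/-- `R(a → T)`: the (1-indexed) row in which the new box appears in `[a → T]`. -/
def newRow (a : ℕ) : List (List ℕ) → ℕ
  | [] => 1
  | c :: cs =>
      match insertCol a c with
      | (none, _) => c.length + 1
      | (some b, _) => newRow b cs

/-- Insert the letters of a word into `T`, the head of the list first (our word
lists are in reading order: the head is the first letter read, which is the
first letter inserted in `[w → T]`). -/
def insertList : List ℕ → List (List ℕ) → List (List ℕ)
  | [], T => T
  | a :: rest, T => insertList rest (colInsert a T)

def sigmaWordAux : List (List ℕ) → List ℕ → List ℕ
  | _, [] => []
  | T, a :: rest => newRow a T :: sigmaWordAux (colInsert a T) rest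

/-- The word `σ(T) = b_N ⋯ b_1` of row indices of the new boxes in the column
insertion of the word `w` into the empty tableau, in the same positional
encoding as `w` itself. -/
def sigmaWord (w : List ℕ) : List ℕ := sigmaWordAux [] w

/-- Iterated insertion of `a 1, a 2, …, a k` into `T`. -/
def insertUpTo (a : ℕ → ℕ) (T : List (List ℕ)) : ℕ → List (List ℕ)
  | 0 => T
  | k+1 => colInsert (a (k+1)) (insertUpTo a T k)

/-- `T` (a list of columns) is a semistandard tableau of partition shape with
positive entries: columns strictly increasing, column lengths weakly
decreasing, rows weakly increasing. -/
structure IsColTab (T : List (List ℕ)) : Prop where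
  ne : ∀ c ∈ T, c ≠ ([] : List ℕ)
  pos : ∀ c ∈ T, ∀ x ∈ c, 0 < x
  colStrict : ∀ c ∈ T, List.Chain' (· < ·) c
  lenDecr : List.Chain' (fun a b => b ≤ a) (T.map List.length)
  rowWeak : ∀ j i, i < (T.getD (j+1) []).length →
      (T.getD j []).getD i 0 ≤ (T.getD (j+1) []).getD i 0

/- ## Charge (Lascoux–Schützenberger) -/

/-- Reading leftwards (cyclically) from position `start` in `w`, the position
of the first occurrence of the letter `t`. -/
def chooseNext (w : List ℕ) (start t : ℕ) : Option ℕ :=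
  let occ := (List.range w.length).filter (fun p => w.getD p 0 = t)
  ((occ.filter (fun p => p < start)).max?) <|> ((occ.filter (fun p => start < p)).max?)

def extractAux (w : List ℕ) : ℕ → ℕ → ℕ → List ℕ
  | 0, _, _ => []
  | fuel+1, start, t =>
      match chooseNext w start t with
      | none => []
      | some p => p :: extractAux w fuel p (t+1)

/-- Positions of the first extracted standard subword of `w`. -/
def extract (w : List ℕ) : List ℕ :=
  extractAux w w.length w.length 1

def chargeIdxAux : ℕ → ℕ → List ℕ → ℕ
  | _, _, [] => 0
  | idx, prev, p :: ps =>
      let idx' := if p < prev then idx + 1 else idx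
      idx' + chargeIdxAux idx' p ps

/-- Charge of a standard subword given by the positions of its letters
`1, 2, …`: the letter `1` has index `0`, and the letter `r+1` has the index of
`r`, increased by one exactly when `r+1` lies to the left of `r`. -/
def chargePos : List ℕ → ℕ
  | [] => 0
  | p :: ps => chargeIdxAux 0 p ps

def removePositions (w : List ℕ) (ps : List ℕ) : List ℕ :=
  ((List.range w.length).filter (fun p => p ∉ ps)).map (fun p => w.getD p 0)

def chargeFuel : ℕ → List ℕ → ℕ
  | 0, _ => 0
  | fuel+1, w =>
      if w.isEmpty then 0
      else
        let ps := extract w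
        chargePos ps + chargeFuel fuel (removePositions w ps)

/-- The charge of a word of partition weight, obtained by repeatedly extracting
standard subwords and summing their charges. -/
def charge (w : List ℕ) : ℕ := chargeFuel w.length w

/-- The word `w` has positive letters and partition weight. -/
def HasPartitionWeight (w : List ℕ) : Prop :=
  (∀ x ∈ w, 0 < x) ∧ ∀ i, 1 ≤ i → w.count (i+1) ≤ w.count i

/- ## Knuth equivalence -/

/-- Elementary Knuth transformations. -/
inductive KnuthStep : List ℕ → List ℕ → Prop
  | k1 (u v : List ℕ) (x y z : ℕ) (hxy : x ≤ y) (hyz : y < z) :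
      KnuthStep (u ++ x :: z :: y :: v) (u ++ z :: x :: y :: v)
  | k2 (u v : List ℕ) (x y z : ℕ) (hxy : x < y) (hyz : y ≤ z) :
      KnuthStep (u ++ y :: z :: x :: v) (u ++ y :: x :: z :: v)

/-- Knuth equivalence: the equivalence relation generated by the elementary
Knuth transformations. -/
def KnuthEquiv : List ℕ → List ℕ → Prop := Relation.EqvGen KnuthStep

/- ## Skew tableaux as functions `ℕ → ℕ → ℕ` (`0` = empty box) -/

/-- `f` is a semistandard skew tableau of shape `lam - rho` (row `i` occupies
columns `rho_i ≤ j < lam_i`, everything 0-indexed): the support is exactly the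
skew shape, rows weakly increase and columns strictly increase. -/
def IsSkewFn (lam rho : List ℕ) (f : ℕ → ℕ → ℕ) : Prop :=
  (∀ i j, f i j ≠ 0 ↔ (rho.getD i 0 ≤ j ∧ j < lam.getD i 0)) ∧
  (∀ i j j', rho.getD i 0 ≤ j → j ≤ j' → j' < lam.getD i 0 → f i j ≤ f i j') ∧
  (∀ i j, f i j ≠ 0 → f (i+1) j ≠ 0 → f i j < f (i+1) j)

/-- The (row-)reading word of `f`, within the bounding box `R × C`: letters are
read right to left in successive rows, starting with the top row; the head of
the list is the first letter read. -/
def readWordF (R C : ℕ) (f : ℕ → ℕ → ℕ) : List ℕ :=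
  ((List.range R).map (fun i =>
    ((List.range C).reverse.map (f i)).filter (fun x => x ≠ 0))).flatten

/-- The word `w` has weight `mu`: the letter `i+1` occurs `mu_i` times. -/
def wtEq (w : List ℕ) (mu : List ℕ) : Prop := ∀ i, w.count (i+1) = mu.getD i 0

/-- `w` is a lattice permutation: in each final segment of the reading
(i.e. each suffix of the list), `i` occurs at least as often as `i+1`. -/
def IsLattice (w : List ℕ) : Prop :=
  ∀ k i, 1 ≤ i → (w.drop k).count (i+1) ≤ (w.drop k).count i

/- ## Jeu de taquin -/

/-- Update a two-variable function at one point. -/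
def upd (f : ℕ → ℕ → ℕ) (i j v : ℕ) : ℕ → ℕ → ℕ :=
  fun i' j' => if i' = i ∧ j' = j then v else f i' j'

/-- One upper jeu de taquin slide: the pawn starts at `(i, j)` and repeatedly
exchanges with the smaller of the letters to its right and below it (the one
below in case of ties), until neither exists.  Returns the resulting tableau
together with the final position of the hole. -/
def slideU : ℕ → (ℕ → ℕ → ℕ) → ℕ → ℕ → ((ℕ → ℕ → ℕ) × ℕ × ℕ)
  | 0, f, i, j => (f, i, j)
  | fuel+1, f, i, j =>
      let r := f i (j+1)
      let b := f (i+1) j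
      if b = 0 ∧ r = 0 then (f, i, j)
      else if b ≠ 0 ∧ (r = 0 ∨ b ≤ r) then
        slideU fuel (upd (upd f i j b) (i+1) j 0) (i+1) j
      else
        slideU fuel (upd (upd f i j r) i (j+1) 0) i (j+1)

/-- One lower jeu de taquin slide: the pawn starts at `(i, j)` and repeatedly
exchanges with the larger of the letters to its left and above it (the one
above in case of ties), until neither exists. -/
def slideL : ℕ → (ℕ → ℕ → ℕ) → ℕ → ℕ → (ℕ → ℕ → ℕ)
  | 0, f, _, _ => f
  | fuel+1, f, i, j =>
      let l := if j = 0 then 0 else f i (j-1)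
      let u := if i = 0 then 0 else f (i-1) j
      if l = 0 ∧ u = 0 then f
      else if u ≠ 0 ∧ (l = 0 ∨ l ≤ u) then
        slideL fuel (upd (upd f i j u) (i-1) j 0) (i-1) j
      else
        slideL fuel (upd (upd f i j l) i (j-1) 0) i (j-1)

/-- Rectification of a skew tableau of shape `lam - rho`: repeatedly slide into
the inner corner at the end of the lowest row with nonzero inner shape,
updating the shape along the way, until the inner shape is empty. -/
def rectify (B : ℕ) : ℕ → List ℕ → List ℕ → (ℕ → ℕ → ℕ) → (ℕ → ℕ → ℕ)
  | 0, _, _, f => f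
  | fuel+1, lam, rho, f =>
      match ((List.range lam.length).filter (fun i => 0 < rho.getD i 0)).max? with
      | none => f
      | some i =>
          let s := slideU B f i (rho.getD i 0 - 1)
          rectify B fuel (lam.set s.2.1 s.2.2) (rho.set i (rho.getD i 0 - 1)) s.1

/-- The jeu de taquin rectification `jdt(T)` of a skew tableau of shape
`lam - rho`. -/
def rect (lam rho : List ℕ) (f : ℕ → ℕ → ℕ) : ℕ → ℕ → ℕ :=
  rectify (lam.length + lam.headD 0 + 1) (rho.sum + 1) lam rho f

/-- The tableau function associated to a list of columns. -/
def colsToFn (cols : List (List ℕ)) : ℕ → ℕ → ℕ :=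
  fun i j => (cols.getD j []).getD i 0


/- ## Polynomial / fermionic machinery -/

/-- The Gaussian binomial coefficient `[p+m choose m]_t` as a polynomial,
defined by the `q`-Pascal recurrence. -/
noncomputable def gauss : ℕ → ℕ → Polynomial ℤ
  | _, 0 => 1
  | 0, _ + 1 => 1
  | p + 1, m + 1 => gauss p (m + 1) + Polynomial.X ^ (p + 1) * gauss (p + 1) m
  termination_by p m => p + m

/-- `n(μ) = Σ_i (i-1) μ_i`. -/
def nstat (mu : List ℕ) : ℕ := ∑ i ∈ Finset.range mu.length, i * mu.getD i 0

/-- `Q_i(λ) = Σ_j min(i, λ_j)`. -/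
def Qi (i : ℕ) (l : List ℕ) : ℤ := ((l.map (fun x => min i x)).sum : ℤ)

/-- `Σ_{i,j} min(i,j) m_i(λ) m_j(κ)`, computed as `Σ_{x ∈ λ, y ∈ κ} min(x,y)`. -/
def pairMin (l k : List ℕ) : ℤ :=
  ((l.map (fun x => (k.map (fun y => min x y)).sum)).sum : ℤ)

/-- Vacancy numbers `p_i^{(a)}` of a configuration `nu` (where `nu 0 = μ` is
the multiplicity data and `nu a = []` for `a ≥ n`). -/
def pVac (nu : ℕ → List ℕ) (a i : ℕ) : ℤ :=
  Qi i (nu (a-1)) - 2 * Qi i (nu a) + Qi i (nu (a+1))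

/-- Admissible `L(μ)`-configurations of weight `lam` in type `A_{n-1}`. -/
def AdmConf (n : ℕ) (mu lam : List ℕ) : Set (ℕ → List ℕ) :=
  {nu | (∀ a, IsPartition (nu a)) ∧ nu 0 = mu ∧ (∀ a, n ≤ a → nu a = []) ∧
    (∀ a, 1 ≤ a → a ≤ n - 1 → (nu a).sum = (lam.drop a).sum) ∧
    (∀ a i, 1 ≤ a → a ≤ n - 1 → 1 ≤ i → 0 ≤ pVac nu a i)}

/-- The cocharge `cc(ν) = ½ Σ_{a,b∈I₀} (α_a,α_b) Σ_{i,j} min(i,j) m_i^{(a)} m_j^{(b)}`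
of a configuration, written without the factor `½` by collecting the diagonal
terms (`(α_a,α_a) = 2`) and the adjacent terms (`(α_a,α_{a±1}) = -1`). -/
def ccConf (n : ℕ) (nu : ℕ → List ℕ) : ℤ :=
  (∑ a ∈ Finset.Icc 1 (n-1), pairMin (nu a) (nu a)) -
  (∑ a ∈ Finset.Icc 1 (n-2), pairMin (nu a) (nu (a+1)))

/-- The set of semistandard tableaux of straight shape `lam` and weight `mu`,
as functions. -/
def TabSet (lam mu : List ℕ) : Set (ℕ → ℕ → ℕ) :=
  {f | IsSkewFn lam [] f ∧ wtEq (readWordF lam.length (lam.headD 0) f) mu}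

/-- The Kostka polynomial `K_{λ,μ}(t)`, via the Lascoux–Schützenberger charge
formula `K_{λ,μ}(t) = Σ_{T ∈ Tab(λ,μ)} t^{c(T)}`. -/
noncomputable def kostka (lam mu : List ℕ) : Polynomial ℤ :=
  ∑ᶠ f ∈ TabSet lam mu,
    (Polynomial.X : Polynomial ℤ) ^ charge (readWordF lam.length (lam.headD 0) f)

/-- The Littlewood–Richardson coefficient `c^ν_{λ',λ''}`: the number of
semistandard skew tableaux of shape `ν - λ'` and weight `λ''` whose reading
word is a lattice permutation. -/
noncomputable def lrCoeff (l' l'' nu : List ℕ) : ℕ :=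
  {f : ℕ → ℕ → ℕ | IsSkewFn nu l' f ∧
    IsLattice (readWordF nu.length (nu.headD 0) f) ∧
    wtEq (readWordF nu.length (nu.headD 0) f) l''}.ncard

/-- The fermionic formula `M(μ, λ; t)` of type `A_{n-1}`, as a Laurent
polynomial: the sum over admissible configurations of
`t^{cc(ν)} Π_{(a,i)} [p_i^{(a)} + m_i^{(a)}, m_i^{(a)}]_t`. -/
noncomputable def fermionicM (n : ℕ) (mu lam : List ℕ) : LaurentPolynomial ℤ :=
  ∑ᶠ nu ∈ AdmConf n mu lam,
    LaurentPolynomial.T (ccConf n nu) *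
      ∏ᶠ a ∈ Set.Icc 1 (n-1), ∏ᶠ i ∈ {i : ℕ | 1 ≤ i},
        Polynomial.toLaurent (gauss ((pVac nu a i).toNat) ((nu a).count i))

/- ## Rigged configurations (with riggings as multisets of strings) -/

/-- `Q_i` for a multiset of parts. -/
def QiM (i : ℕ) (s : Multiset ℕ) : ℤ := ((s.map (fun x => min i x)).sum : ℤ)

/-- The underlying configuration of a rigged configuration: `ν^{(0)} = μ`, and
`ν^{(a)}` is the multiset of string lengths of `RC a` for `a ≥ 1`. -/
def nuOf (mu : List ℕ) (RC : ℕ → Multiset (ℕ × ℤ)) (a : ℕ) : Multiset ℕ :=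
  if a = 0 then (mu : Multiset ℕ) else (RC a).map Prod.fst

/-- Vacancy numbers of a rigged configuration. -/
def pRC (mu : List ℕ) (RC : ℕ → Multiset (ℕ × ℤ)) (a i : ℕ) : ℤ :=
  QiM i (nuOf mu RC (a-1)) - 2 * QiM i (nuOf mu RC a) + QiM i (nuOf mu RC (a+1))

/-- Basic validity of a rigged configuration in type `A_{n-1}`: nothing outside
`1 ≤ a ≤ n-1`, and all string lengths are positive. -/
def RCvalid (n : ℕ) (RC : ℕ → Multiset (ℕ × ℤ)) : Prop :=
  RC 0 = 0 ∧ (∀ a, n ≤ a → RC a = 0) ∧ ∀ a s, s ∈ RC a → 1 ≤ s.1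

end DK

/-!
Inserting `u` leaves `u` in the first column, so the subsequent insertion of `v ≤ u` always
bumps there, and it bumps an entry no larger than the one `u` bumped (if any). Column by
column, the bumping path of `v` therefore stays weakly above that of `u`: either both paths
continue with letters `b' ≤ b`, or the path of `u` stops in the current column `c`, creating a
box in row `c.length + 1`, while that of `v` continues into columns no longer than `c`.
-/

namespace DK

lemma le_of_insertCol_fst_eq_some {a b : ℕ} :
    ∀ {c : List ℕ}, (insertCol a c).1 = some b → a ≤ b
  | [], h => by simp [insertCol] at h
  | x :: xs, h => by
    by_cases hax : a ≤ x
    · simp only [insertCol, if_pos hax, Option.some.injEq] at h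
      exact h ▸ hax
    · simp only [insertCol, if_neg hax] at h
      exact le_of_insertCol_fst_eq_some h

lemma exists_insertCol_insertCol_fst_eq_some {u v : ℕ} (hvu : v ≤ u) :
    ∀ c : List ℕ, ∃ b', (insertCol v (insertCol u c).2).1 = some b' ∧
      ∀ b, (insertCol u c).1 = some b → b' ≤ b
  | [] => ⟨u, by simp [insertCol, hvu]⟩
  | x :: xs => by
    by_cases hux : u ≤ x
    · refine ⟨u, by simp [insertCol, hux, hvu], fun b hb => ?_⟩
      simp only [insertCol, if_pos hux, Option.some.injEq] at hb
      exact hb ▸ hux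
    by_cases hvx : v ≤ x
    · refine ⟨x, by simp [insertCol, hux, hvx], fun b hb => ?_⟩
      simp only [insertCol, if_neg hux] at hb
      exact (Nat.le_of_not_le hux).trans (le_of_insertCol_fst_eq_some hb)
    · obtain ⟨b', hb', hle⟩ := exists_insertCol_insertCol_fst_eq_some hvu xs
      exact ⟨b', by simpa [insertCol, hux, hvx] using hb', by simpa [insertCol, hux] using hle⟩

lemma newRow_le_length_succ (a : ℕ) :
    ∀ (c : List ℕ) (cs : List (List ℕ)),
      List.IsChain (fun x y => y ≤ x) ((c :: cs).map List.length) →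
      newRow a cs ≤ c.length + 1
  | _, [], _ => by simp [newRow]
  | c, d :: ds, h => by
    simp only [List.map_cons, List.isChain_cons_cons] at h
    rcases hd : insertCol a d with ⟨_ | b, d'⟩
    · simpa [newRow, hd] using h.1
    · simpa [newRow, hd] using (newRow_le_length_succ b d ds (by simpa using h.2)).trans
        (Nat.succ_le_succ h.1)

lemma newRow_colInsert_le {T : List (List ℕ)}
    (hT : List.IsChain (fun x y => y ≤ x) (T.map List.length)) {u v : ℕ} (hvu : v ≤ u) :
    newRow v (colInsert u T) ≤ newRow u T := by
  induction T generalizing u v with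
  | nil => simp [colInsert, newRow, insertCol, hvu]
  | cons c cs ih =>
    obtain ⟨b', hb', hle⟩ := exists_insertCol_insertCol_fst_eq_some hvu c
    rcases hu : insertCol u c with ⟨_ | b, c'⟩ <;> rw [hu] at hb' hle <;>
      rcases hv : insertCol v c' with ⟨_, c''⟩ <;> simp only [hv] at hb' <;> subst hb'
    · simpa [colInsert, newRow, hu, hv] using newRow_le_length_succ b' c cs hT
    · simpa [colInsert, newRow, hu, hv] using ih (by simpa using hT.tail) (hle b rfl)

end DK

theorem colInsert_newRow_mono_general (T : List (List ℕ)) (hT : DK.IsColTab T)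
    (u v : ℕ) (huv : v ≤ u) :
    DK.newRow v (DK.colInsert u T) ≤ DK.newRow u T :=
  DK.newRow_colInsert_le hT.lenDecr huv

/-- Lemma 1.2.1: if `v ≤ u`, the new box created by column-inserting `v` into
`[u → T]` is in a row no lower than the new box created by column-inserting
`u` into `T`. -/
theorem colInsert_newRow_mono (T : List (List ℕ)) (hT : DK.IsColTab T)
    (u v : ℕ) (hv : 0 < v) (huv : v ≤ u) :
    DK.newRow v (DK.colInsert u T) ≤ DK.newRow u T :=
  colInsert_newRow_mono_general T hT u v huv
end

section
/- Let $w = a_m a_{m-1} \cdots a_1$ be a weakly increasing word read right to left (i.e., $a_m \leq a_{m-1} \leq \cdots \leq a_1$), and let $T$ be a semistandard tableau of partition shape. For each $k$, let $R_k$ be the row index of the new box created when $a_k$ is column-inserted into $[a_{k-1} \cdots a_1 \to T]$. Then $R_m \leq R_{m-1} \leq \cdots \leq R_1$, i.e., the sequence of row indices $R_m \cdots R_1$ is itself a row word. -/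
/-!
Only two properties of `T` matter: no column is shorter than the next one, and rows weakly
increase (`ColLE` between neighbouring columns); column insertion preserves both. If `a' ≤ a` is
inserted right after `a`, then in each column on the bumping path of `a`, `a'` bumps a letter no
larger than the one `a` bumped there, so the two paths can be compared column by column. Where the
path of `a` ends by adding a box at the bottom of a column, `a'` is bumped out of that column at a
row no lower, and the weakly increasing rows keep the rest of its path from going below that row.
-/

namespace DK

lemma getD_set_of_ne (c : List ℕ) {i k : ℕ} (a : ℕ) (h : i ≠ k) :
    (c.set i a).getD k 0 = c.getD k 0 := by
  grind

lemma getD_set_self {c : List ℕ} {i : ℕ} (a : ℕ) (h : i < c.length) :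
    (c.set i a).getD i 0 = a := by
  grind

lemma getD_mem_of_lt {c : List ℕ} {i : ℕ} (h : i < c.length) : c.getD i 0 ∈ c := by
  grind

lemma getD_set_le {c : List ℕ} {i a : ℕ} (ha : a ≤ c.getD i 0) (k : ℕ) :
    (c.set i a).getD k 0 ≤ c.getD k 0 := by
  grind

lemma getD_set_le_of_le {c : List ℕ} {i a : ℕ} (ha : a ≤ c.getD i 0)
    (hlt : ∀ k < i, c.getD k 0 < a) {k : ℕ} (hk : k ≤ i) :
    (c.set i a).getD k 0 ≤ c.getD i 0 := by
  rcases hk.lt_or_eq with hk | rfl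
  · have := hlt k hk
    grind
  · grind

lemma insertCol_cases (a : ℕ) (c : List ℕ) :
    (insertCol a c = (none, c ++ [a]) ∧ ∀ x ∈ c, x < a) ∨
    (∃ i < c.length, insertCol a c = (some (c.getD i 0), c.set i a) ∧
      a ≤ c.getD i 0 ∧ ∀ k < i, c.getD k 0 < a) := by
  induction c with
  | nil => simp [insertCol]
  | cons x xs ih =>
    by_cases hx : a ≤ x
    · exact Or.inr ⟨0, by simp, by simp [insertCol, hx], hx, by omega⟩
    · rcases ih with ⟨heq, hall⟩ | ⟨i, hi, heq, hai, hlt⟩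
      · left
        simp only [insertCol, hx, if_false, heq, List.cons_append, true_and]
        grind
      · right
        refine ⟨i + 1, by simpa using hi, by simp [insertCol, hx, heq], by simpa using hai, ?_⟩
        rintro (_ | k) hk
        · simpa using hx
        · simpa using hlt k (by omega)

lemma colInsert_cons_of_none {a : ℕ} {c c' : List ℕ} (cs : List (List ℕ))
    (h : insertCol a c = (none, c')) : colInsert a (c :: cs) = c' :: cs := by
  simp only [colInsert, h]

lemma colInsert_cons_of_some {a b : ℕ} {c c' : List ℕ} (cs : List (List ℕ))
    (h : insertCol a c = (some b, c')) : colInsert a (c :: cs) = c' :: colInsert b cs := by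
  simp only [colInsert, h]

lemma newRow_cons_of_none {a : ℕ} {c c' : List ℕ} (cs : List (List ℕ))
    (h : insertCol a c = (none, c')) : newRow a (c :: cs) = c.length + 1 := by
  simp only [newRow, h]

lemma newRow_cons_of_some {a b : ℕ} {c c' : List ℕ} (cs : List (List ℕ))
    (h : insertCol a c = (some b, c')) : newRow a (c :: cs) = newRow b cs := by
  simp only [newRow, h]

def ColLE (c d : List ℕ) : Prop :=
  d.length ≤ c.length ∧ ∀ k < d.length, c.getD k 0 ≤ d.getD k 0

lemma colLE_nil (c : List ℕ) : ColLE c [] := ⟨Nat.zero_le _, by simp⟩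

lemma colLE_append {c e : List ℕ} (a : ℕ) (h : ColLE c e) : ColLE (c ++ [a]) e := by
  obtain ⟨hlen, hle⟩ := h
  refine ⟨by simp; omega, fun k hk => ?_⟩
  rw [List.getD_append _ _ _ _ (by omega)]
  exact hle k hk

lemma colLE_set_insertCol {c e : List ℕ} {i a : ℕ} (h : ColLE c e) (hi : i < c.length)
    (ha : a ≤ c.getD i 0) (hlt : ∀ k < i, c.getD k 0 < a) :
    ColLE (c.set i a) (insertCol (c.getD i 0) e).2 := by
  obtain ⟨hlen, hle⟩ := h
  rcases insertCol_cases (c.getD i 0) e with ⟨heq, hall⟩ | ⟨q, hq, heq, -, hqlt⟩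
  · have hei : e.length ≤ i := by
      by_contra! hie
      exact absurd (hall _ (getD_mem_of_lt hie)) (not_lt.2 (hle i hie))
    rw [heq]
    refine ⟨by simp; omega, fun k hk => ?_⟩
    simp only [List.length_append, List.length_singleton] at hk
    rcases (Nat.lt_succ_iff.1 hk).lt_or_eq with hk | rfl
    · rw [List.getD_append _ _ _ _ hk]
      exact (getD_set_le ha k).trans (hle k hk)
    · rw [List.getD_append_right _ _ _ _ le_rfl, Nat.sub_self]
      exact getD_set_le_of_le ha hlt hei
  · have hqi : q ≤ i := by
      by_contra! hiq
      exact absurd (hqlt i hiq) (not_lt.2 (hle i (by omega)))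
    rw [heq]
    refine ⟨by simp; omega, fun k hk => ?_⟩
    rw [List.length_set] at hk
    by_cases hqk : q = k
    · subst hqk
      rw [getD_set_self _ hq]
      exact getD_set_le_of_le ha hlt hqi
    · rw [getD_set_of_ne _ _ hqk]
      exact (getD_set_le ha k).trans (hle k hk)

lemma isChain_cons_iff_colLE_headD {c : List ℕ} {T : List (List ℕ)} :
    List.IsChain ColLE (c :: T) ↔ ColLE c (T.headD []) ∧ List.IsChain ColLE T := by
  cases T with
  | nil => simpa using colLE_nil c
  | cons d ds => exact List.isChain_cons_cons

lemma headD_colInsert (b : ℕ) (T : List (List ℕ)) :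
    (colInsert b T).headD [] = (insertCol b (T.headD [])).2 := by
  cases T with
  | nil => rfl
  | cons c cs => rcases h : insertCol b c with ⟨_ | _, _⟩ <;> simp [colInsert, h]

lemma isChain_colInsert {T : List (List ℕ)} (hT : List.IsChain ColLE T) (b : ℕ) :
    List.IsChain ColLE (colInsert b T) := by
  induction T generalizing b with
  | nil => exact List.isChain_singleton _
  | cons c cs ih =>
    obtain ⟨hc, hcs⟩ := isChain_cons_iff_colLE_headD.1 hT
    rcases insertCol_cases b c with ⟨heq, -⟩ | ⟨i, hi, heq, hbi, hlt⟩
    · rw [colInsert_cons_of_none cs heq]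
      exact isChain_cons_iff_colLE_headD.2 ⟨colLE_append b hc, hcs⟩
    · rw [colInsert_cons_of_some cs heq, isChain_cons_iff_colLE_headD, headD_colInsert]
      exact ⟨colLE_set_insertCol hc hi hbi hlt, ih hcs _⟩

lemma newRow_le_of_le_getD {V : List (List ℕ)} (hV : List.IsChain ColLE V) {x q : ℕ}
    (hx : q < (V.headD []).length → x ≤ (V.headD []).getD q 0) : newRow x V ≤ q + 1 := by
  induction V generalizing x q with
  | nil => simp [newRow]
  | cons e es ih =>
    obtain ⟨he, hes⟩ := isChain_cons_iff_colLE_headD.1 hV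
    rcases insertCol_cases x e with ⟨heq, hall⟩ | ⟨r, hr, heq, -, hlt⟩
    · have : e.length ≤ q := by
        by_contra! hq
        exact absurd (hall _ (getD_mem_of_lt hq)) (not_lt.2 (hx hq))
      rw [newRow_cons_of_none es heq]
      omega
    · have hrq : r ≤ q := by
        by_contra! hqr
        exact absurd (hlt q hqr) (not_lt.2 (hx (by simp; omega)))
      rw [newRow_cons_of_some es heq]
      have := ih hes (x := e.getD r 0) (q := r) (fun h => he.2 r h)
      omega

lemma newRow_colInsert_le_s3 {T : List (List ℕ)} (hT : List.IsChain ColLE T) {a a' : ℕ}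
    (h : a' ≤ a) : newRow a' (colInsert a T) ≤ newRow a T := by
  induction T generalizing a a' with
  | nil => simp [colInsert, newRow, insertCol, h]
  | cons d ds ih =>
    obtain ⟨hd, hds⟩ := isChain_cons_iff_colLE_headD.1 hT
    rcases insertCol_cases a d with ⟨heq, -⟩ | ⟨i, hi, heq, hai, hlt⟩
    · rw [colInsert_cons_of_none ds heq, newRow_cons_of_none ds heq]
      rcases insertCol_cases a' (d ++ [a]) with ⟨-, hall'⟩ | ⟨q, hq, heq', -, -⟩
      · exact absurd (hall' a (by simp)) (by omega)
      · rw [newRow_cons_of_some ds heq']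
        have hqd : q ≤ d.length := by simp at hq; omega
        refine (newRow_le_of_le_getD hds (q := q) fun hq' => ?_).trans (by omega)
        rw [List.getD_append _ _ _ _ (by have := hd.1; omega)]
        exact hd.2 q hq'
    · rw [colInsert_cons_of_some ds heq, newRow_cons_of_some ds heq]
      rcases insertCol_cases a' (d.set i a) with ⟨-, hall'⟩ | ⟨i', -, heq', -, hlt'⟩
      · exact absurd (hall' a (List.mem_set hi a)) (by omega)
      · rw [newRow_cons_of_some _ heq']
        have hi'i : i' ≤ i := by
          by_contra! hii'
          exact absurd (hlt' i hii') (by rw [getD_set_self a hi]; omega)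
        exact ih hds (getD_set_le_of_le hai hlt hi'i)

lemma IsColTab.isChain_colLE {T : List (List ℕ)} (hT : IsColTab T) : List.IsChain ColLE T := by
  refine List.isChain_iff_getElem.2 fun j hj => ⟨?_, fun k hk => ?_⟩
  · simpa using List.isChain_iff_getElem.1 ((List.isChain_map _).1 hT.lenDecr) j hj
  · have := hT.rowWeak j k
    simp only [List.getD_eq_getElem _ _ hj, List.getD_eq_getElem _ _ (Nat.lt_of_succ_lt hj)] at this
    exact this hk

lemma isChain_insertUpTo {T : List (List ℕ)} (hT : List.IsChain ColLE T) (a : ℕ → ℕ)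
    (k : ℕ) :
    List.IsChain ColLE (insertUpTo a T k) := by
  induction k with
  | zero => exact hT
  | succ k ih => exact isChain_colInsert ih _

end DK

theorem row_insert_rows_general (m : ℕ) (a : ℕ → ℕ) (T : List (List ℕ))
    (hT : DK.IsColTab T)
    (hrow : ∀ k, 1 ≤ k → k < m → a (k + 1) ≤ a k) :
    ∀ k, 1 ≤ k → k < m →
      DK.newRow (a (k + 1)) (DK.insertUpTo a T k) ≤
        DK.newRow (a k) (DK.insertUpTo a T (k - 1)) := by
  rintro (_ | k) hk hkm
  · omega
  · exact DK.newRow_colInsert_le_s3 (DK.isChain_insertUpTo hT.isChain_colLE a k)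
      (hrow (k + 1) hk hkm)

/-- Corollary 1.2.2: successively column-inserting the letters of a row word
`a_m ≤ a_{m-1} ≤ ⋯ ≤ a_1` into a tableau of partition shape produces new
boxes whose row indices again form a row word `R_m ≤ R_{m-1} ≤ ⋯ ≤ R_1`. -/
theorem row_insert_rows (m : ℕ) (a : ℕ → ℕ) (T : List (List ℕ))
    (hT : DK.IsColTab T)
    (hpos : ∀ k, 1 ≤ k → k ≤ m → 0 < a k)
    (hrow : ∀ k, 1 ≤ k → k < m → a (k + 1) ≤ a k) :
    ∀ k, 1 ≤ k → k < m →
      DK.newRow (a (k + 1)) (DK.insertUpTo a T k) ≤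
        DK.newRow (a k) (DK.insertUpTo a T (k - 1)) :=
  row_insert_rows_general m a T hT hrow
end

section
/- For nonnegative integers $p$ and $m$, the generating function of partitions fitting inside a $p \times m$ box (i.e., partitions with at most $m$ parts, each part at most $p$), weighted by size, equals the Gaussian binomial coefficient $\binom{p+m}{m}_t = \frac{(t^{p+1}-1)\cdots(t^{p+m}-1)}{(t-1)\cdots(t^m-1)}$. -/
/-!
Splitting the partitions in a `(p+1) × (m+1)` box according to whether the largest part equals
`p + 1` shows that their generating function satisfies the `q`-Pascal recurrence defining
`DK.gauss`. The cleared-denominator identity then follows by the same double induction, since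
`(t^{p+1} - 1) + t^{p+1} (t^{m+1} - 1) = t^{p+m+2} - 1`.
-/

namespace DK

open Polynomial Finset

theorem isPartition_cons_iff {a : ℕ} {t : List ℕ} :
    IsPartition (a :: t) ↔ 0 < a ∧ (∀ x ∈ t, x ≤ a) ∧ IsPartition t := by
  have : Trans (fun a b : ℕ => b ≤ a) (fun a b => b ≤ a) (fun a b => b ≤ a) :=
    ⟨fun hab hbc => hbc.trans hab⟩
  simp only [IsPartition, List.Chain', List.isChain_iff_pairwise, List.pairwise_cons,
    List.mem_cons, forall_eq_or_imp]
  tauto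

@[simp]
theorem isPartition_nil : IsPartition [] := ⟨List.isChain_nil, by simp⟩

def boxPartitions : ℕ → ℕ → Finset (List ℕ)
  | _, 0 => {[]}
  | 0, _ + 1 => {[]}
  | p + 1, m + 1 =>
      boxPartitions p (m + 1) ∪
        (boxPartitions (p + 1) m).map ⟨List.cons (p + 1), List.cons_injective⟩
  termination_by p m => p + m

theorem mem_boxPartitions {p m : ℕ} {l : List ℕ} :
    l ∈ boxPartitions p m ↔ IsPartition l ∧ l.length ≤ m ∧ ∀ x ∈ l, x ≤ p := by
  induction p, m using boxPartitions.induct generalizing l with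
  | case1 p => rcases l with _ | ⟨a, t⟩ <;> simp [boxPartitions]
  | case2 m =>
    rcases l with _ | ⟨a, t⟩
    · simp [boxPartitions]
    · simp only [boxPartitions, mem_singleton, reduceCtorEq, false_iff, isPartition_cons_iff]
      rintro ⟨⟨ha, -⟩, -, hle⟩
      exact lt_irrefl 0 (ha.trans_le (hle a List.mem_cons_self))
  | case3 p m ih_left ih_right =>
    rw [boxPartitions, mem_union, mem_map, ih_left]
    rcases l with _ | ⟨a, t⟩
    · simp
    · simp only [ih_right, isPartition_cons_iff, Function.Embedding.coeFn_mk, List.cons.injEq,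
        List.length_cons, add_le_add_iff_right, List.mem_cons, forall_eq_or_imp]
      grind

theorem sum_boxPartitions (p m : ℕ) :
    ∑ l ∈ boxPartitions p m, (X : ℤ[X]) ^ l.sum = gauss p m := by
  induction p, m using boxPartitions.induct with
  | case1 p => simp [boxPartitions, gauss]
  | case2 m => simp [boxPartitions, gauss]
  | case3 p m ih_left ih_right =>
    have hdisj : Disjoint (boxPartitions p (m + 1))
        ((boxPartitions (p + 1) m).map ⟨List.cons (p + 1), List.cons_injective⟩) := by
      simp only [disjoint_left, mem_map, mem_boxPartitions, not_exists, not_and]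
      rintro _ ⟨-, -, hle⟩ t - rfl
      exact (hle (p + 1) List.mem_cons_self).not_gt p.lt_succ_self
    rw [boxPartitions, sum_union hdisj, sum_map, ih_left, gauss]
    simp only [Function.Embedding.coeFn_mk, List.sum_cons, pow_add, ← mul_sum, ih_right]

theorem gauss_mul_prod (p m : ℕ) :
    gauss p m * ∏ k ∈ range m, ((X : ℤ[X]) ^ (k + 1) - 1) =
      ∏ k ∈ range m, ((X : ℤ[X]) ^ (p + (k + 1)) - 1) := by
  induction p, m using gauss.induct with
  | case1 p => simp [gauss]
  | case2 m => simp [gauss]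
  | case3 p m ih_left ih_right =>
    have hnum : ∏ k ∈ range (m + 1), ((X : ℤ[X]) ^ (p + (k + 1)) - 1) =
        (X ^ (p + 1) - 1) * ∏ k ∈ range m, (X ^ (p + 1 + (k + 1)) - 1) := by
      rw [prod_range_succ', mul_comm]
      congr 1
      exact prod_congr rfl fun k _ => by rw [show p + (k + 1 + 1) = p + 1 + (k + 1) by omega]
    rw [prod_range_succ, hnum] at ih_left
    rw [gauss, prod_range_succ, prod_range_succ, Nat.succ_eq_add_one]
    linear_combination ih_left + X ^ (p + 1) * (X ^ (m + 1) - 1) * ih_right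

end DK

/-- The generating function of partitions inside a `p × m` box, weighted by
size, equals the Gaussian binomial coefficient
`[p+m, m]_t = (t^{p+1}-1)⋯(t^{p+m}-1) / ((t-1)⋯(t^m-1))`, stated here after
clearing denominators. -/
theorem partitions_in_box_gauss (p m : ℕ) :
    (∑ᶠ l ∈ {l : List ℕ | DK.IsPartition l ∧ l.length ≤ m ∧ ∀ x ∈ l, x ≤ p},
        (Polynomial.X : Polynomial ℤ) ^ l.sum) *
      (∏ k ∈ Finset.range m, ((Polynomial.X : Polynomial ℤ) ^ (k + 1) - 1)) =
    ∏ k ∈ Finset.range m, ((Polynomial.X : Polynomial ℤ) ^ (p + (k + 1)) - 1) := by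
  have hbox : {l : List ℕ | DK.IsPartition l ∧ l.length ≤ m ∧ ∀ x ∈ l, x ≤ p} =
      ↑(DK.boxPartitions p m) := by
    ext l
    exact DK.mem_boxPartitions.symm
  rw [hbox, finsum_mem_coe_finset, DK.sum_boxPartitions, DK.gauss_mul_prod]
end

section
/- Let $\mu$ be a partition of $N$ and $\lambda$ a partition of $N$ with at most $n$ parts. Let $(\nu, J)$ be an $L(\mu)$-rigged configuration of type $A_{n-1}$ satisfying: (1) $|\nu^{(a)}| = \sum_{j > a} \lambda_j$ for $1 \leq a \leq n-1$, and (2') $p_i^{(a)} \geq 0$ whenever $m_i^{(a)} > 0$. Then $p_i^{(a)} \geq 0$ for ALL pairs $(a, i)$ with $1 \leq a \leq n-1$ and $i \geq 1$. -/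
/-!
Fix `a`. The sequence `i ↦ p_i^{(a)}` vanishes at `i = 0`, and once `i` exceeds every part of
`ν^{(a-1)}, ν^{(a)}, ν^{(a+1)}` it equals `λ_a - λ_{a+1} ≥ 0`. Its second difference at `i` is
`-m_i^{(a-1)} + 2 m_i^{(a)} - m_i^{(a+1)}`, so it is concave wherever `m_i^{(a)} = 0`, which by (2')
includes every `i` where it is negative. A concave dip below zero between two nonnegative ends is
impossible.
-/

/-- Discrete minimum principle: at the leftmost global minimum `j + 1` of a negative dip we would
have `f j > f (j + 1) ≤ f (j + 2)`, contradicting concavity there. -/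
theorem nonneg_of_concave_where_neg (f : ℕ → ℤ) (M : ℕ) (h_zero : 0 ≤ f 0)
    (h_large : ∀ j, M ≤ j → 0 ≤ f j)
    (h_concave : ∀ j, f (j + 1) < 0 → f j + f (j + 2) ≤ 2 * f (j + 1)) (i : ℕ) : 0 ≤ f i := by
  classical
  by_contra! hi
  have h_min : ∃ m, ∀ l, f m ≤ f l := by
    obtain ⟨m, -, hm⟩ := Finset.exists_min_image (Finset.range (M + 1)) f ⟨0, by simp⟩
    refine ⟨m, fun l => ?_⟩
    by_cases hl : l ≤ M
    · exact hm l (by simp; omega)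
    · have hiM : i < M := by by_contra! h; exact (h_large i h).not_gt hi
      linarith [hm i (by simp; omega), h_large l (by omega)]
  have h_least : ∀ l, f (Nat.find h_min) ≤ f l := Nat.find_spec h_min
  obtain ⟨j, hj⟩ : ∃ j, Nat.find h_min = j + 1 :=
    Nat.exists_eq_add_one.mpr (Nat.pos_of_ne_zero fun h => by linarith [h ▸ h_least i])
  rw [hj] at h_least
  obtain ⟨l, hl⟩ := not_forall.mp (Nat.find_min h_min (show j < Nat.find h_min by omega))
  have h_left : f (j + 1) < f j := by linarith [h_least l, not_le.mp hl]
  linarith [h_least (j + 2), h_concave j (by linarith [h_least i])]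

theorem List.sum_drop_eq_getD_add (l : List ℕ) (j : ℕ) :
    (l.drop j).sum = l.getD j 0 + (l.drop (j + 1)).sum := by
  induction l generalizing j with
  | nil => simp
  | cons x xs ih =>
    cases j with
    | zero => simp
    | succ j => simpa using ih j

theorem List.getD_succ_le_of_isChain_ge {l : List ℕ} (h : l.IsChain (fun a b => b ≤ a)) (j : ℕ) :
    l.getD (j + 1) 0 ≤ l.getD j 0 := by
  by_cases hj : j + 1 < l.length
  · rw [List.getD_eq_getElem l 0 hj, List.getD_eq_getElem l 0 (by omega)]
    exact List.isChain_iff_getElem.mp h j hj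
  · rw [List.getD_eq_default l 0 (by omega)]
    exact Nat.zero_le _

theorem List.two_mul_sum_drop_succ_le_of_isChain_ge {l : List ℕ}
    (h : l.IsChain (fun a b => b ≤ a)) (j : ℕ) :
    2 * (l.drop (j + 1)).sum ≤ (l.drop j).sum + (l.drop (j + 2)).sum := by
  have h_j := l.sum_drop_eq_getD_add j
  have h_succ : (l.drop (j + 1)).sum = l.getD (j + 1) 0 + (l.drop (j + 2)).sum :=
    l.sum_drop_eq_getD_add (j + 1)
  have := List.getD_succ_le_of_isChain_ge h j
  omega

namespace DK

theorem Qi_cons (i x : ℕ) (l : List ℕ) : Qi i (x :: l) = (min i x : ℕ) + Qi i l := by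
  simp [Qi]

theorem Qi_zero (l : List ℕ) : Qi 0 l = 0 := by
  simp [Qi]

theorem Qi_add_Qi_add_count (m : ℕ) (l : List ℕ) :
    Qi m l + Qi (m + 2) l + l.count (m + 1) = 2 * Qi (m + 1) l := by
  induction l with
  | nil => simp [Qi]
  | cons x xs ih =>
    rw [Qi_cons, Qi_cons, Qi_cons, List.count_cons]
    by_cases hx : x = m + 1 <;> simp [hx] <;> omega

theorem Qi_of_sum_le {i : ℕ} {l : List ℕ} (h : l.sum ≤ i) : Qi i l = l.sum := by
  have : l.map (fun x => min i x) = l.map id :=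
    List.map_congr_left fun x hx => min_eq_right ((List.le_sum_of_mem hx).trans h)
  simp [Qi, this]

theorem pVac_zero (nu : ℕ → List ℕ) (a : ℕ) : pVac nu a 0 = 0 := by
  simp [pVac, Qi_zero]

theorem pVac_add_pVac_le_two_mul {nu : ℕ → List ℕ} {a m : ℕ} (h : (nu a).count (m + 1) = 0) :
    pVac nu a m + pVac nu a (m + 2) ≤ 2 * pVac nu a (m + 1) := by
  have h_below := Qi_add_Qi_add_count m (nu (a - 1))
  have h_at := Qi_add_Qi_add_count m (nu a)
  have h_above := Qi_add_Qi_add_count m (nu (a + 1))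
  rw [h, Nat.cast_zero, add_zero] at h_at
  simp only [pVac]
  linarith [((nu (a - 1)).count (m + 1)).cast_nonneg (α := ℤ),
    ((nu (a + 1)).count (m + 1)).cast_nonneg (α := ℤ)]

theorem pVac_of_sum_le {nu : ℕ → List ℕ} {a i : ℕ}
    (h : (nu (a - 1)).sum + (nu a).sum + (nu (a + 1)).sum ≤ i) :
    pVac nu a i = (nu (a - 1)).sum - 2 * (nu a).sum + (nu (a + 1)).sum := by
  simp only [pVac, Qi_of_sum_le (by omega : (nu (a - 1)).sum ≤ i),
    Qi_of_sum_le (by omega : (nu a).sum ≤ i), Qi_of_sum_le (by omega : (nu (a + 1)).sum ≤ i)]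

end DK

theorem vacancy_nonneg_everywhere_general (n N : ℕ) (lam mu : List ℕ) (nu : ℕ → List ℕ)
    (hlam : DK.IsPartition lam) (hlsum : lam.sum = N) (hllen : lam.length ≤ n)
    (hmusum : mu.sum = N)
    (h0 : nu 0 = mu) (htop : ∀ a, n ≤ a → nu a = [])
    (hsize : ∀ a, 1 ≤ a → a ≤ n - 1 → (nu a).sum = (lam.drop a).sum)
    (h2' : ∀ a i, 1 ≤ a → a ≤ n - 1 → 1 ≤ i → 0 < (nu a).count i →
      0 ≤ DK.pVac nu a i) :
    ∀ a i, 1 ≤ a → a ≤ n - 1 → 1 ≤ i → 0 ≤ DK.pVac nu a i := by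
  have h_sum : ∀ b, (nu b).sum = (lam.drop b).sum := by
    intro b
    rcases Nat.eq_zero_or_pos b with rfl | hb
    · rw [h0, hmusum, ← hlsum, List.drop_zero]
    by_cases hbn : b ≤ n - 1
    · exact hsize b hb hbn
    · rw [htop b (by omega), List.drop_eq_nil_of_le (by omega), List.sum_nil]
  intro a i ha1 ha2 _
  refine nonneg_of_concave_where_neg (DK.pVac nu a)
    ((nu (a - 1)).sum + (nu a).sum + (nu (a + 1)).sum) (DK.pVac_zero nu a).ge
    (fun j hj => ?_) (fun j hneg => DK.pVac_add_pVac_le_two_mul ?_) i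
  · obtain ⟨b, rfl⟩ : ∃ b, a = b + 1 := Nat.exists_eq_add_one.mpr ha1
    rw [DK.pVac_of_sum_le hj, h_sum, h_sum, h_sum, Nat.add_sub_cancel]
    have : 2 * (lam.drop (b + 1)).sum ≤ (lam.drop b).sum + (lam.drop (b + 1 + 1)).sum :=
      lam.two_mul_sum_drop_succ_le_of_isChain_ge hlam.1 b
    omega
  · by_contra hcount
    exact hneg.not_ge (h2' a (j + 1) ha1 ha2 (by omega) (Nat.pos_of_ne_zero hcount))

/-- Lemma 4.4.1: if a configuration has `|ν^{(a)}| = Σ_{j>a} λ_j` and its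
vacancy numbers are nonnegative wherever `m_i^{(a)} > 0`, then all vacancy
numbers are nonnegative. -/
theorem vacancy_nonneg_everywhere (n N : ℕ) (lam mu : List ℕ) (nu : ℕ → List ℕ)
    (hn : 1 ≤ n)
    (hlam : DK.IsPartition lam) (hlsum : lam.sum = N) (hllen : lam.length ≤ n)
    (hmu : DK.IsPartition mu) (hmusum : mu.sum = N)
    (hpart : ∀ a, DK.IsPartition (nu a))
    (h0 : nu 0 = mu) (htop : ∀ a, n ≤ a → nu a = [])
    (hsize : ∀ a, 1 ≤ a → a ≤ n - 1 → (nu a).sum = (lam.drop a).sum)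
    (h2' : ∀ a i, 1 ≤ a → a ≤ n - 1 → 1 ≤ i → 0 < (nu a).count i →
      0 ≤ DK.pVac nu a i) :
    ∀ a i, 1 ≤ a → a ≤ n - 1 → 1 ≤ i → 0 ≤ DK.pVac nu a i :=
  vacancy_nonneg_everywhere_general n N lam mu nu hlam hlsum hllen hmusum h0 htop hsize h2'
end

section
/- Let $\Bla = (\lambda', \lambda'')$ with $\lambda' = (\lambda'_1,\ldots,\lambda'_s)$, $\lambda'' = (\lambda''_1,\ldots,\lambda''_t)$, $s+t \leq n$, and choose an integer $m \geq N$ where $N = |\lambda'| + |\lambda''|$. Set $\xi = (\lambda'_1 + m, \ldots, \lambda'_s + m, \lambda''_1, \ldots, \lambda''_t)$ and $\rho = (m^s)$. Then an $L(\mu)$-rigged configuration $(\nu,J)$ with $|\nu^{(a)}| = \sum_{j \geq a+1}(\xi_j - \rho_j)$ for all $a$ satisfies $\widetilde{p}_i^{(a)} := p_i^{(a)} + \delta_{a,s}\min(i,m) \geq 0$ for all $(a,i)$ if and only if $p_i^{(a)} + \delta_{a,s}\, i \geq 0$ for all $(a,i)$ with $m_i^{(a)} \neq 0$; in particular $\min(i,m)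 = i$ can be used whenever it matters, so $\mathrm{QM}(\mu, \xi - \rho) = \mathrm{QM}(\mu, \Bla)$ independently of the choice of $m \geq N$. -/
/-!
For fixed `a`, `i ↦ p̃_i^{(a)}` is the second difference `Q_i(A) - 2 Q_i(B) + Q_i(C)` with
`A = ν^{(a-1)}` (plus one part `m` when `a = s`), `B = ν^{(a)}`, `C = ν^{(a+1)}`. All parts are
at most `N ≤ m`, so this function vanishes at `i = 0` and equals `ξ_a - ξ_{a+1} ≥ 0` for
`i ≥ m`. Its own second difference at `i` is `m_i(A) - 2 m_i(B) + m_i(C)`, so it is concave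
away from the parts of `ν^{(a)}`; once negative it would then keep decreasing, contradicting
its value at `m`. Hence `p̃^{(a)} ≥ 0` as soon as it holds at the parts of `ν^{(a)}`, where
`min(i, m) = i`; and there the riggings `0 ≤ x ≤ p_i^{(a)} + δ_{a,s} i` already force it.
-/

namespace DK

lemma QiM_zero (X : Multiset ℕ) : QiM 0 X = 0 := by
  simp [QiM]

lemma QiM_eq_sum {i : ℕ} {X : Multiset ℕ} (h : ∀ x ∈ X, x ≤ i) : QiM i X = X.sum := by
  rw [QiM, Multiset.map_congr rfl fun x hx => min_eq_right (h x hx), Multiset.map_id']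

lemma two_mul_QiM_succ (k : ℕ) (X : Multiset ℕ) :
    2 * QiM (k + 1) X = QiM k X + QiM (k + 2) X + X.count (k + 1) := by
  induction X using Multiset.induction with
  | empty => simp [QiM]
  | cons x X ih =>
    simp only [QiM, Multiset.map_cons, Multiset.sum_cons, Multiset.count_cons] at ih ⊢
    split_ifs <;> omega

lemma nonneg_of_concave_on_neg {g : ℕ → ℤ} {K : ℕ} (h0 : 0 ≤ g 0)
    (hK : ∀ i, K ≤ i → 0 ≤ g i) (hconc : ∀ i, g (i + 1) < 0 → g i + g (i + 2) ≤ 2 * g (i + 1))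
    (i : ℕ) : 0 ≤ g i := by
  have decreasing : ∀ i, 0 ≤ g i ∨ (g (i + 1) ≤ g i ∧ g i < 0) := by
    intro i
    induction i with
    | zero => exact .inl h0
    | succ i ih =>
      refine or_iff_not_imp_left.2 fun hneg => ⟨?_, by omega⟩
      have := hconc i (by omega)
      show g (i + 2) ≤ g (i + 1)
      rcases ih with ih | ih <;> omega
  have stays_neg : g i < 0 → ∀ d, g (i + d) < 0 := by
    intro hi d
    induction d with
    | zero => exact hi
    | succ d ih =>
      rw [← add_assoc]
      rcases decreasing (i + d) with h | h <;> omega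
  by_contra hi
  have := stays_neg (by omega) K
  have := hK (i + K) (by omega)
  omega

lemma second_diff_QiM_nonneg {A B C : Multiset ℕ} {K : ℕ} (hA : ∀ x ∈ A, x ≤ K)
    (hB : ∀ x ∈ B, x ≤ K) (hC : ∀ x ∈ C, x ≤ K) (hsum : 2 * (B.sum : ℤ) ≤ A.sum + C.sum)
    (hparts : ∀ i ∈ B, i ≠ 0 → 0 ≤ QiM i A - 2 * QiM i B + QiM i C) (i : ℕ) :
    0 ≤ QiM i A - 2 * QiM i B + QiM i C := by
  refine nonneg_of_concave_on_neg (g := fun i => QiM i A - 2 * QiM i B + QiM i C) (K := K)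
    (by simp [QiM_zero]) (fun i hi => ?_) (fun i hneg => ?_) i
  · rw [QiM_eq_sum fun x hx => (hA x hx).trans hi, QiM_eq_sum fun x hx => (hB x hx).trans hi,
      QiM_eq_sum fun x hx => (hC x hx).trans hi]
    linarith
  · -- off the parts of `B` the second difference is `count A + count C ≥ 0`
    have hB0 : B.count (i + 1) = 0 := by
      by_contra hc
      exact hneg.not_ge (hparts _ (Multiset.count_ne_zero.1 hc) (by omega))
    have := two_mul_QiM_succ i A
    have := two_mul_QiM_succ i B
    have := two_mul_QiM_succ i C
    simp only [hB0, Nat.cast_zero] at *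
    linarith [(A.count (i + 1)).cast_nonneg (α := ℤ), (C.count (i + 1)).cast_nonneg (α := ℤ)]

lemma getD_succ_le_getD {l : List ℕ} (h : l.IsChain (· ≥ ·)) (j : ℕ) :
    l.getD (j + 1) 0 ≤ l.getD j 0 := by
  rcases lt_or_ge (j + 1) l.length with hj | hj
  · rw [List.getD_eq_getElem _ _ hj, List.getD_eq_getElem _ _ (by omega)]
    exact List.isChain_iff_getElem.1 h j hj
  · rw [List.getD_eq_default _ _ hj]
    exact Nat.zero_le _

lemma getD_append_le_getD_pred {l' l'' : List ℕ} (h' : l'.IsChain (· ≥ ·))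
    (h'' : l''.IsChain (· ≥ ·)) {a : ℕ} (ha : 1 ≤ a) :
    (l' ++ l'').getD a 0 ≤ (l' ++ l'').getD (a - 1) 0 + if a = l'.length then l''.sum else 0 := by
  obtain ⟨j, rfl⟩ : ∃ j, a = j + 1 := ⟨a - 1, by omega⟩
  rw [Nat.add_sub_cancel]
  rcases lt_trichotomy (j + 1) l'.length with hj | hj | hj
  · rw [List.getD_append _ _ _ _ hj, List.getD_append _ _ _ _ (by omega), if_neg hj.ne]
    exact (getD_succ_le_getD h' j).trans (Nat.le_add_right _ _)
  · rw [List.getD_append_right _ _ _ _ hj.ge, if_pos hj, hj, Nat.sub_self]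
    cases l'' with
    | nil => simp
    | cons x l'' => simp only [List.getD_cons_zero, List.sum_cons]; omega
  · rw [List.getD_append_right _ _ _ _ hj.le, List.getD_append_right _ _ _ _ (by omega),
      if_neg hj.ne', show j + 1 - l'.length = j - l'.length + 1 by omega]
    exact getD_succ_le_getD h'' _

lemma sum_drop_eq_getD_add (l : List ℕ) (b : ℕ) :
    (l.drop b).sum = l.getD b 0 + (l.drop (b + 1)).sum := by
  rcases lt_or_ge b l.length with h | h
  · rw [List.drop_eq_getElem_cons h, List.sum_cons, List.getD_eq_getElem l 0 h]
  · rw [List.drop_eq_nil_of_le h, List.drop_eq_nil_of_le (Nat.le_succ_of_le h),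
      List.getD_eq_default l 0 h]
    rfl

lemma sum_drop_map_add_append (m : ℕ) (l' l'' : List ℕ) (a : ℕ) :
    ((l'.map (· + m) ++ l'').drop a).sum =
      ((l' ++ l'').drop a).sum + ((List.replicate l'.length m).drop a).sum := by
  induction l' generalizing a with
  | nil => simp
  | cons x l' ih =>
    cases a with
    | zero =>
      have := ih 0
      simp [List.replicate_succ] at this ⊢
      omega
    | succ a => simpa [List.replicate_succ] using ih a

section RiggedConfiguration

variable {mu : List ℕ} {RC : ℕ → Multiset (ℕ × ℤ)}

lemma mem_nuOf_of_mem (h0 : RC 0 = 0) {a : ℕ} {str : ℕ × ℤ} (h : str ∈ RC a) :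
    str.1 ∈ nuOf mu RC a := by
  have ha : a ≠ 0 := by rintro rfl; simp [h0] at h
  rw [nuOf, if_neg ha]
  exact Multiset.mem_map_of_mem _ h

lemma sum_nuOf_eq_sum_drop {n : ℕ} {w : List ℕ} (hval : RCvalid n RC) (hlen : w.length ≤ n)
    (hmu : mu.sum = w.sum)
    (hsize : ∀ a, 1 ≤ a → a ≤ n - 1 → ((RC a).map Prod.fst).sum = (w.drop a).sum) (b : ℕ) :
    (nuOf mu RC b).sum = (w.drop b).sum := by
  rcases Nat.eq_zero_or_pos b with rfl | hb
  · simp [nuOf, hmu]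
  rw [nuOf, if_neg hb.ne']
  by_cases hbn : n ≤ b
  · simp [hval.2.1 b hbn, List.drop_eq_nil_of_le (hlen.trans hbn)]
  · exact hsize b hb (by omega)

lemma min_eq_of_mem_nuOf {w : List ℕ} (hsum : ∀ b, (nuOf mu RC b).sum = (w.drop b).sum)
    {m : ℕ} (hm : w.sum ≤ m) {b i : ℕ} (hi : i ∈ nuOf mu RC b) : (min i m : ℤ) = i := by
  have := (Multiset.le_sum_of_mem hi).trans <|
    (hsum b).trans_le <| (List.drop_sublist b w).sum_le_sum fun _ _ => Nat.zero_le _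
  omega

lemma pRC_add_min_eq (s m a i : ℕ) :
    pRC mu RC a i + (if a = s then (min i m : ℤ) else 0) =
      QiM i (nuOf mu RC (a - 1) + if a = s then {m} else 0) - 2 * QiM i (nuOf mu RC a) +
        QiM i (nuOf mu RC (a + 1)) := by
  split_ifs
  · simp [pRC, QiM]
    ring
  · simp [pRC]

lemma vacancy_nonneg_iff {n m : ℕ} {l' l'' : List ℕ} (h' : l'.IsChain (· ≥ ·))
    (h'' : l''.IsChain (· ≥ ·)) (hm : (l' ++ l'').sum ≤ m)
    (hsum : ∀ b, (nuOf mu RC b).sum = ((l' ++ l'').drop b).sum) :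
    (∀ a i, 1 ≤ a → a ≤ n - 1 → 1 ≤ i →
        0 ≤ pRC mu RC a i + (if a = l'.length then (min i m : ℤ) else 0)) ↔
      (∀ a i, 1 ≤ a → a ≤ n - 1 → 1 ≤ i → (nuOf mu RC a).count i ≠ 0 →
        0 ≤ pRC mu RC a i + (if a = l'.length then (i : ℤ) else 0)) := by
  have hmin : ∀ {b i}, i ∈ nuOf mu RC b → (min i m : ℤ) = i := min_eq_of_mem_nuOf hsum hm
  have hbound : ∀ b, ∀ x ∈ nuOf mu RC b, x ≤ m := fun b x hx => by
    have := hmin hx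
    omega
  constructor
  · intro h a i ha ha' hi hc
    rw [← hmin (Multiset.count_ne_zero.1 hc)]
    exact h a i ha ha' hi
  · intro h a i ha ha' _
    rw [pRC_add_min_eq]
    refine second_diff_QiM_nonneg (K := m) (fun x hx => ?_) (hbound a) (hbound (a + 1)) ?_
      (fun j hj hj0 => ?_) i
    · rcases Multiset.mem_add.1 hx with hx | hx
      · exact hbound _ x hx
      · split_ifs at hx <;> simp_all
    · -- the value for `i ≥ m`, namely `ξ_a - ξ_{a+1} ≥ 0`
      have hsat : 2 * ((l' ++ l'').drop a).sum ≤ ((l' ++ l'').drop (a - 1)).sum +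
          (if a = l'.length then m else 0) + ((l' ++ l'').drop (a + 1)).sum := by
        have hstep := getD_append_le_getD_pred h' h'' ha
        have := sum_drop_eq_getD_add (l' ++ l'') (a - 1)
        have := sum_drop_eq_getD_add (l' ++ l'') a
        have : l''.sum ≤ m := by rw [List.sum_append] at hm; omega
        rw [Nat.sub_add_cancel ha] at *
        split_ifs at * <;> omega
      have hextra : (if a = l'.length then {m} else 0 : Multiset ℕ).sum =
          if a = l'.length then m else 0 := by split_ifs <;> simp
      rw [Multiset.sum_add, hsum, hsum, hsum, hextra]
      exact_mod_cast hsat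
    · rw [← pRC_add_min_eq, hmin hj]
      exact h a j ha ha' (by omega) (Multiset.count_ne_zero.2 hj)

lemma vacancy_nonneg_of_riggings {s : ℕ}
    (hrig : ∀ a str, str ∈ RC a → 0 ≤ str.2 ∧
      str.2 ≤ pRC mu RC a str.1 + (if a = s then (str.1 : ℤ) else 0))
    {a i : ℕ} (ha : a ≠ 0) (hi : (nuOf mu RC a).count i ≠ 0) :
    0 ≤ pRC mu RC a i + (if a = s then (i : ℤ) else 0) := by
  rw [nuOf, if_neg ha] at hi
  obtain ⟨str, hstr, rfl⟩ := Multiset.mem_map.1 (Multiset.count_ne_zero.1 hi)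
  exact (hrig a str hstr).1.trans (hrig a str hstr).2

end RiggedConfiguration

end DK

theorem qm_skew_eq_qm_double_general (n N s t m : ℕ) (l' l'' mu : List ℕ)
    (hs : l'.length = s) (ht : l''.length = t) (hst : s + t ≤ n)
    (h1 : DK.IsPartition l') (h2 : DK.IsPartition l'')
    (hN : l'.sum + l''.sum = N) (hmusum : mu.sum = N)
    (hm : N ≤ m) :
    (∀ RC : ℕ → Multiset (ℕ × ℤ), DK.RCvalid n RC →
      (∀ a, 1 ≤ a → a ≤ n - 1 →
        ((RC a).map Prod.fst).sum =
          ((l'.map (· + m) ++ l'').drop a).sum - ((List.replicate s m).drop a).sum) →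
      ((∀ a i, 1 ≤ a → a ≤ n - 1 → 1 ≤ i →
          0 ≤ DK.pRC mu RC a i + (if a = s then (min i m : ℤ) else 0)) ↔
        (∀ a i, 1 ≤ a → a ≤ n - 1 → 1 ≤ i → (DK.nuOf mu RC a).count i ≠ 0 →
          0 ≤ DK.pRC mu RC a i + (if a = s then (i : ℤ) else 0)))) ∧
    {RC : ℕ → Multiset (ℕ × ℤ) | DK.RCvalid n RC ∧
        (∀ a, 1 ≤ a → a ≤ n - 1 →
          ((RC a).map Prod.fst).sum =
            ((l'.map (· + m) ++ l'').drop a).sum - ((List.replicate s m).drop a).sum) ∧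
        (∀ a i, 1 ≤ a → a ≤ n - 1 → 1 ≤ i →
          0 ≤ DK.pRC mu RC a i + (if a = s then (min i m : ℤ) else 0)) ∧
        (∀ a str, str ∈ RC a → 0 ≤ str.2 ∧
          str.2 ≤ DK.pRC mu RC a str.1 +
            (if a = s then (min str.1 m : ℤ) else 0))} =
    {RC : ℕ → Multiset (ℕ × ℤ) | DK.RCvalid n RC ∧
        (∀ a, 1 ≤ a → a ≤ n - 1 →
          ((RC a).map Prod.fst).sum =
            ((l'.map (· + m) ++ l'').drop a).sum - ((List.replicate s m).drop a).sum) ∧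
        (∀ a str, str ∈ RC a → 0 ≤ str.2 ∧
          str.2 ≤ DK.pRC mu RC a str.1 +
            (if a = s then (str.1 : ℤ) else 0))} := by
  subst hs
  have hlen : (l' ++ l'').length ≤ n := by simpa [ht] using hst
  have hwm : (l' ++ l'').sum ≤ m := by simpa [hN] using hm
  have hsum : ∀ RC, DK.RCvalid n RC → (∀ a, 1 ≤ a → a ≤ n - 1 →
      ((RC a).map Prod.fst).sum =
        ((l'.map (· + m) ++ l'').drop a).sum - ((List.replicate l'.length m).drop a).sum) →
      ∀ b, (DK.nuOf mu RC b).sum = ((l' ++ l'').drop b).sum :=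
    fun RC hval hsize => DK.sum_nuOf_eq_sum_drop hval hlen (by simp [hmusum, hN])
      fun a ha ha' => by rw [hsize a ha ha', DK.sum_drop_map_add_append, Nat.add_sub_cancel]
  refine ⟨fun RC hval hsize => DK.vacancy_nonneg_iff h1.1 h2.1 hwm (hsum RC hval hsize), ?_⟩
  ext RC
  simp only [Set.mem_ofPred_eq]
  refine ⟨fun ⟨hval, hsize, _, hrig⟩ => ⟨hval, hsize, fun a str hstr => ?_⟩,
    fun ⟨hval, hsize, hrig⟩ => ⟨hval, hsize, ?_, fun a str hstr => ?_⟩⟩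
  · rw [← DK.min_eq_of_mem_nuOf (hsum RC hval hsize) hwm (DK.mem_nuOf_of_mem hval.1 hstr)]
    exact hrig a str hstr
  · exact (DK.vacancy_nonneg_iff h1.1 h2.1 hwm (hsum RC hval hsize)).2
      fun a i ha _ _ hi => DK.vacancy_nonneg_of_riggings hrig (by omega) hi
  · rw [DK.min_eq_of_mem_nuOf (hsum RC hval hsize) hwm (DK.mem_nuOf_of_mem hval.1 hstr)]
    exact hrig a str hstr

/-- The content of the proof of Lemma 4.8.1: with `ξ = (λ'_1+m, …, λ'_s+m,
λ''_1, …, λ''_t)` and `ρ = (m^s)` for `m ≥ N`, an `L(μ)`-rigged configuration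
with `|ν^{(a)}| = Σ_{j≥a+1}(ξ_j - ρ_j)` has all
`p̃_i^{(a)} = p_i^{(a)} + δ_{a,s} min(i,m) ≥ 0` if and only if
`p_i^{(a)} + δ_{a,s} i ≥ 0` whenever `m_i^{(a)} ≠ 0`; consequently
`QM(μ, ξ-ρ) = QM(μ, 𝛌)`, independently of the choice of `m ≥ N`. -/
theorem qm_skew_eq_qm_double (n N s t m : ℕ) (l' l'' mu : List ℕ)
    (hs : l'.length = s) (ht : l''.length = t) (hst : s + t ≤ n)
    (h1 : DK.IsPartition l') (h2 : DK.IsPartition l'')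
    (hmu : DK.IsPartition mu)
    (hN : l'.sum + l''.sum = N) (hmusum : mu.sum = N)
    (hm : N ≤ m) :
    (∀ RC : ℕ → Multiset (ℕ × ℤ), DK.RCvalid n RC →
      (∀ a, 1 ≤ a → a ≤ n - 1 →
        ((RC a).map Prod.fst).sum =
          ((l'.map (· + m) ++ l'').drop a).sum - ((List.replicate s m).drop a).sum) →
      ((∀ a i, 1 ≤ a → a ≤ n - 1 → 1 ≤ i →
          0 ≤ DK.pRC mu RC a i + (if a = s then (min i m : ℤ) else 0)) ↔
        (∀ a i, 1 ≤ a → a ≤ n - 1 → 1 ≤ i → (DK.nuOf mu RC a).count i ≠ 0 →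
          0 ≤ DK.pRC mu RC a i + (if a = s then (i : ℤ) else 0)))) ∧
    {RC : ℕ → Multiset (ℕ × ℤ) | DK.RCvalid n RC ∧
        (∀ a, 1 ≤ a → a ≤ n - 1 →
          ((RC a).map Prod.fst).sum =
            ((l'.map (· + m) ++ l'').drop a).sum - ((List.replicate s m).drop a).sum) ∧
        (∀ a i, 1 ≤ a → a ≤ n - 1 → 1 ≤ i →
          0 ≤ DK.pRC mu RC a i + (if a = s then (min i m : ℤ) else 0)) ∧
        (∀ a str, str ∈ RC a → 0 ≤ str.2 ∧
          str.2 ≤ DK.pRC mu RC a str.1 +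
            (if a = s then (min str.1 m : ℤ) else 0))} =
    {RC : ℕ → Multiset (ℕ × ℤ) | DK.RCvalid n RC ∧
        (∀ a, 1 ≤ a → a ≤ n - 1 →
          ((RC a).map Prod.fst).sum =
            ((l'.map (· + m) ++ l'').drop a).sum - ((List.replicate s m).drop a).sum) ∧
        (∀ a str, str ∈ RC a → 0 ≤ str.2 ∧
          str.2 ≤ DK.pRC mu RC a str.1 +
            (if a = s then (str.1 : ℤ) else 0))} :=
  qm_skew_eq_qm_double_general n N s t m l' l'' mu hs ht hst h1 h2 hN hmusum hm
end
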